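/- arXiv:1402.1004 — 4 statements merged into one kernel-verified Lean document; each statement's English description precedes it below -/
import Mathlib

section
/- For all complex s, q, w with -q not a nonpositive integer, the confluent hypergeometric function satisfies Kummer's transformation: ₁F₁(s; q; w) = exp(w) · ₁F₁(q - s; q; -w). -/
open Complex

/-- Pochhammer symbol (rising factorial) for a complex parameter. -/
noncomputable def pochC (a : ℂ) (n : ℕ) : ℂ := ∏ i ∈ Finset.range n, (a + i)

/-- Kummer confluent hypergeometric function ₁F₁ (complex). -/
noncomputable def hyp1F1C (s q w : ℂ) : ℂ :=
  ∑' l : ℕ, pochC s l / (pochC q l * (Nat.factorial l)) * w ^ l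

/-!
Multiply `exp w = ∑ wⁱ / i!` by `₁F₁(q - s; q; -w)` as a Cauchy product. Comparing coefficients
of `wⁿ` and clearing denominators with `(q)ₙ = (q)ⱼ (q + j)ᵢ` and `n! = C(n,i) i! j!` leaves
`(s)ₙ = ∑_{i+j=n} C(n,i) (q + j)ᵢ (-1)ʲ (q - s)ⱼ`. Written with falling factorials
`x⁽ᵏ⁾ = x (x - 1) ⋯ (x - k + 1)` this is the Chu–Vandermonde identity
`(s + n - 1)⁽ⁿ⁾ = ∑_{i+j=n} C(n,i) (q + n - 1)⁽ⁱ⁾ (s - q)⁽ʲ⁾`.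
The Cauchy product is legitimate because both series converge absolutely: up to the factor `Γ(q)`,
the `₁F₁` series is Mathlib's regularized hypergeometric series, which has infinite radius.
-/

open Polynomial Finset
open scoped Nat

section Pochhammer

variable {R : Type*}

theorem descPochhammer_smeval_eq_eval [Ring R] (r : R) (n : ℕ) :
    (descPochhammer ℤ n).smeval r = (descPochhammer R n).eval r := by
  rw [descPochhammer_smeval_eq_ascPochhammer, ascPochhammer_smeval_eq_eval,
    descPochhammer_eval_eq_ascPochhammer]

theorem descPochhammer_eval_add [Ring R] {r t : R} (h : Commute r t) (n : ℕ) :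
    (descPochhammer R n).eval (r + t) = ∑ ij ∈ antidiagonal n,
      n.choose ij.1 * ((descPochhammer R ij.1).eval r * (descPochhammer R ij.2).eval t) := by
  simp only [← descPochhammer_smeval_eq_eval, Ring.descPochhammer_smeval_add n h]

theorem descPochhammer_eval_eq_neg_one_pow_mul [Ring R] (r : R) (n : ℕ) :
    (descPochhammer R n).eval r = (-1) ^ n * (ascPochhammer R n).eval (-r) := by
  rw [ascPochhammer_eval_neg_eq_descPochhammer, ← mul_assoc, ← pow_add, Even.neg_one_pow ⟨n, rfl⟩,
    one_mul]

theorem ascPochhammer_eval_mul_eval_add_natCast [CommSemiring R] (r : R) (m n : ℕ) :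
    (ascPochhammer R m).eval r * (ascPochhammer R n).eval (r + m) =
      (ascPochhammer R (m + n)).eval r := by
  rw [← ascPochhammer_mul, eval_mul, eval_comp, eval_add, eval_X, eval_natCast]

theorem ascPochhammer_eval_eq_sum_antidiagonal [CommRing R] (s q : R) (n : ℕ) :
    (ascPochhammer R n).eval s = ∑ ij ∈ antidiagonal n, n.choose ij.1 *
      ((ascPochhammer R ij.1).eval (q + ij.2) *
        ((-1) ^ ij.2 * (ascPochhammer R ij.2).eval (q - s))) := by
  have hdesc : (ascPochhammer R n).eval s = (descPochhammer R n).eval ((q + n - 1) + (s - q)) := by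
    rw [descPochhammer_eval_eq_ascPochhammer]; ring_nf
  rw [hdesc, descPochhammer_eval_add (Commute.all _ _)]
  refine sum_congr rfl fun ij hij => ?_
  rw [HasAntidiagonal.mem_antidiagonal] at hij
  rw [descPochhammer_eval_eq_ascPochhammer, descPochhammer_eval_eq_neg_one_pow_mul, ← hij]
  push_cast
  ring_nf

theorem ascPochhammer_eval_ne_zero [Ring R] [IsDomain R] {q : R} (hq : ∀ k : ℕ, q ≠ -k)
    (n : ℕ) : (ascPochhammer R n).eval q ≠ 0 := by
  rw [Ne, ascPochhammer_eval_eq_zero_iff]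
  rintro ⟨k, -, hk⟩
  exact hq k (by rw [hk, neg_neg])

end Pochhammer

theorem pochC_eq_eval_ascPochhammer (a : ℂ) (n : ℕ) : pochC a n = (ascPochhammer ℂ n).eval a := by
  induction n with
  | zero => simp [pochC]
  | succ n ih => rw [pochC, prod_range_succ, ← pochC, ih, ascPochhammer_succ_eval]

noncomputable def hyp1F1Coeff (s q : ℂ) (n : ℕ) : ℂ :=
  (ascPochhammer ℂ n).eval s / ((ascPochhammer ℂ n).eval q * n !)

theorem hyp1F1C_eq_tsum (s q w : ℂ) : hyp1F1C s q w = ∑' n, hyp1F1Coeff s q n * w ^ n := by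
  simp only [hyp1F1C, hyp1F1Coeff, pochC_eq_eval_ascPochhammer]

theorem hyp1F1Coeff_eq_sum_antidiagonal {q : ℂ} (hq : ∀ k : ℕ, q ≠ -k) (s : ℂ) (n : ℕ) :
    hyp1F1Coeff s q n =
      ∑ ij ∈ antidiagonal n, (ij.1 ! : ℂ)⁻¹ * ((-1) ^ ij.2 * hyp1F1Coeff (q - s) q ij.2) := by
  rw [hyp1F1Coeff, ascPochhammer_eval_eq_sum_antidiagonal s q n, sum_div]
  refine sum_congr rfl fun ⟨i, j⟩ hij => ?_
  rw [HasAntidiagonal.mem_antidiagonal] at hij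
  subst hij
  have hfact : ((i + j) ! : ℂ) = (i + j).choose i * i ! * j ! := by
    rw [Nat.choose_symm_add]; exact_mod_cast (Nat.add_choose_mul_factorial_mul_factorial i j).symm
  have hchoose : ((i + j).choose i : ℂ) ≠ 0 := by
    exact_mod_cast (Nat.choose_pos (Nat.le_add_right i j)).ne'
  have hpoch : (ascPochhammer ℂ j).eval q ≠ 0 := ascPochhammer_eval_ne_zero hq j
  have hpoch_shift : (ascPochhammer ℂ i).eval (q + j) ≠ 0 :=
    ascPochhammer_eval_ne_zero (fun k h => hq (j + k) (by push_cast; linear_combination h)) i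
  rw [hyp1F1Coeff, add_comm i j, ← ascPochhammer_eval_mul_eval_add_natCast, add_comm j i, hfact]
  field_simp

theorem Gamma_mul_regularizedHGFunCoeff {q : ℂ} (hq : ∀ k : ℕ, q ≠ -k) (s : ℂ) (n : ℕ) :
    Gamma q * regularizedHGFunCoeff {s} {q} n = hyp1F1Coeff s q n := by
  have hGamma : Gamma q ≠ 0 := Gamma_ne_zero hq
  simp only [regularizedHGFunCoeff, hyp1F1Coeff, ← Gamma_add_nat_div_Gamma_eq q hq,
    Multiset.map_singleton, Multiset.prod_singleton]
  field_simp

theorem summable_norm_hyp1F1Coeff_mul_pow {q : ℂ} (hq : ∀ k : ℕ, q ≠ -k) (s w : ℂ) :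
    Summable fun n => ‖hyp1F1Coeff s q n * w ^ n‖ := by
  have h := (regularizedHGFunSeries {s} {q}).summable_norm_apply (x := w)
    (by simp [radius_regularizedHGFunSeries_eq_top])
  simp only [regularizedHGFunSeries, FormalMultilinearSeries.ofScalars_apply_eq, smul_eq_mul] at h
  simpa [← Gamma_mul_regularizedHGFunCoeff hq, mul_assoc] using h.mul_left ‖Gamma q‖

/-- Kummer's transformation: ₁F₁(s; q; w) = e^w ₁F₁(q - s; q; -w), provided
that `-q` is not a nonpositive integer (i.e. `q` is not `0, -1, -2, ...`). -/
theorem kummer_transformation (s q w : ℂ) (hq : ∀ n : ℕ, q ≠ -(n : ℂ)) :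
    hyp1F1C s q w = Complex.exp w * hyp1F1C (q - s) q (-w) := by
  rw [hyp1F1C_eq_tsum, hyp1F1C_eq_tsum, exp_eq_exp_ℂ,
    ← (NormedSpace.expSeries_div_hasSum_exp w).tsum_eq,
    tsum_mul_tsum_eq_tsum_sum_antidiagonal_of_summable_norm
      (NormedSpace.norm_expSeries_div_summable w) (summable_norm_hyp1F1Coeff_mul_pow hq _ _)]
  refine tsum_congr fun n => ?_
  rw [hyp1F1Coeff_eq_sum_antidiagonal hq s n, sum_mul]
  refine sum_congr rfl fun ⟨i, j⟩ hij => ?_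
  rw [HasAntidiagonal.mem_antidiagonal] at hij
  subst hij
  rw [pow_add, neg_pow]
  ring
end

section
/- For parameters a, d with -a and -d not nonpositive integers, and all real (or complex) w, z: Ψ₂(a; d, a; w, z) = exp(w + z) · Φ₃(d − a; d; −w, w·z). -/
open Real MeasureTheory Filter

/-- Pochhammer symbol (rising factorial) for a real parameter. -/
noncomputable def poch (a : ℝ) (n : ℕ) : ℝ := ∏ i ∈ Finset.range n, (a + i)

/-- Modified Bessel function of the first kind of real order. -/
noncomputable def besselI (ν x : ℝ) : ℝ :=
  ∑' k : ℕ, (x / 2) ^ (2 * (k : ℝ) + ν) / (Real.Gamma (ν + k + 1) * (Nat.factorial k))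

/-- Generalized Marcum Q function of real order. -/
noncomputable def marcumQ (M α β : ℝ) : ℝ :=
  α ^ (1 - M) *
    ∫ x in Set.Ioi β, x ^ M * Real.exp (-(α ^ 2 + x ^ 2) / 2) * besselI (M - 1) (α * x)

/-- Confluent hypergeometric function of two variables Φ₃. -/
noncomputable def phi3 (b g w z : ℝ) : ℝ :=
  ∑' q : ℕ × ℕ,
    poch b q.1 / (poch g (q.1 + q.2) * (Nat.factorial q.1) * (Nat.factorial q.2)) *
      w ^ q.1 * z ^ q.2

/-- Confluent hypergeometric function of two variables Ψ₂. -/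
noncomputable def psi2 (a d d' w z : ℝ) : ℝ :=
  ∑' q : ℕ × ℕ,
    poch a (q.1 + q.2) / (poch d q.1 * poch d' q.2 * (Nat.factorial q.1) * (Nat.factorial q.2)) *
      w ^ q.1 * z ^ q.2

/-- Kummer confluent hypergeometric function ₁F₁ (real). -/
noncomputable def hyp1F1 (a b z : ℝ) : ℝ :=
  ∑' l : ℕ, poch a l / (poch b l * (Nat.factorial l)) * z ^ l

/-!
Multiply the double series `exp (w + z) = ∑ w ^ p z ^ q / (p! q!)` by the series of
`Φ₃(d - a; d; -w, w z)`, whose terms are monomials `w ^ (m + n) z ^ n`, and collect the monomial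
`w ^ k z ^ l`; absolute convergence, which rests on the bound `|(d)_j| ≥ δ ^ j j!`, justifies the
rearrangement. The coefficients then agree by the Chu–Vandermonde identity
`(y + s)_K = ∑ C(K, m) s^{(m)} (y + m)_{K - m}`, with `s^{(m)}` the falling factorial, applied
twice: summing over `m` gives `(a + n)_{k - n}`, and then summing over `n` gives
`(a + l)_k = (a)_{k + l} / (a)_l`.
-/

open Finset Polynomial

lemma poch_eq_ascPochhammer_eval (a : ℝ) (n : ℕ) : poch a n = (ascPochhammer ℝ n).eval a := by
  induction n with
  | zero => simp [poch]
  | succ n ih => rw [poch, prod_range_succ, ← poch, ih, ascPochhammer_succ_eval]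

lemma poch_add (a : ℝ) (m n : ℕ) : poch a (m + n) = poch a m * poch (a + m) n := by
  simp only [poch_eq_ascPochhammer_eval, ← ascPochhammer_mul, eval_mul, eval_comp, eval_add,
    eval_X, eval_natCast]

lemma poch_ne_zero {a : ℝ} (ha : ∀ n : ℕ, a ≠ -(n : ℝ)) (n : ℕ) : poch a n ≠ 0 :=
  prod_ne_zero_iff.mpr fun i _ h => ha i (eq_neg_of_add_eq_zero_left h)

lemma poch_eq_descPochhammer_smeval (a : ℝ) (n : ℕ) :
    poch a n = (descPochhammer ℤ n).smeval (a + n - 1) := by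
  rw [descPochhammer_smeval_eq_ascPochhammer, ascPochhammer_smeval_eq_eval,
    poch_eq_ascPochhammer_eval]
  ring_nf

lemma neg_one_pow_mul_poch (x : ℝ) (n : ℕ) :
    (-1) ^ n * poch x n = (descPochhammer ℤ n).smeval (-x) := by
  rw [descPochhammer_smeval_eq_ascPochhammer, ascPochhammer_smeval_eq_eval,
    ← descPochhammer_eval_eq_ascPochhammer, poch_eq_ascPochhammer_eval, ← neg_neg x,
    ascPochhammer_eval_neg_eq_descPochhammer, neg_neg, ← mul_assoc, ← pow_add, ← two_mul,
    pow_mul, neg_one_sq, one_pow, one_mul]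

/-- Chu–Vandermonde, with one rising factorial replaced by a falling one. -/
lemma poch_add_eq_sum (y s : ℝ) (K : ℕ) :
    poch (y + s) K =
      ∑ m ∈ range (K + 1), K.choose m * (descPochhammer ℤ m).smeval s * poch (y + m) (K - m) := by
  rw [poch_eq_descPochhammer_smeval, show y + s + K - 1 = s + (y + K - 1) by ring,
    Ring.descPochhammer_smeval_add _ (Commute.all _ _), Nat.sum_antidiagonal_eq_sum_range_succ
      fun i j => (K.choose i : ℝ) *
        ((descPochhammer ℤ i).smeval s * (descPochhammer ℤ j).smeval (y + K - 1))]
  refine sum_congr rfl fun m hm => ?_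
  rw [poch_eq_descPochhammer_smeval, Nat.cast_sub (by simpa [Nat.lt_succ_iff] using hm), mul_assoc]
  ring_nf

open Nat in
lemma neg_one_pow_mul_poch_div_eq {d : ℝ} (hd : ∀ n : ℕ, d ≠ -(n : ℝ)) (x : ℝ) {k l m n : ℕ}
    (hn : n ≤ min k l) (hm : m ≤ k - n) :
    (-1) ^ m * poch x m / (poch d (m + n) * m ! * n ! * (k - m - n)! * (l - n)!) =
      (k.choose n : ℝ) * l.descFactorial n * (((k - n).choose m : ℝ) *
        (descPochhammer ℤ m).smeval (-x) * poch (d + n + m) (k - n - m)) /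
          (poch d k * k ! * l !) := by
  have hd_split : poch d k = poch d (m + n) * poch (d + n + m) (k - n - m) := by
    have h := poch_add d (m + n) (k - n - m)
    rw [show m + n + (k - n - m) = k by omega] at h
    rw [h, Nat.cast_add, add_comm (m : ℝ), add_assoc]
  have hk : (k ! : ℝ) = k.choose n * ((k - n).choose m * m ! * (k - m - n)!) * n ! := by
    rw [show k - m - n = k - n - m by omega]
    norm_cast
    rw [choose_mul_factorial_mul_factorial hm, mul_right_comm,
      choose_mul_factorial_mul_factorial (by omega)]
  have hl : (l ! : ℝ) = (l - n)! * l.descFactorial n :=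
    mod_cast (factorial_mul_descFactorial (by omega)).symm
  have hdesc : (l.descFactorial n : ℝ) ≠ 0 :=
    mod_cast descFactorial_eq_zero_iff_lt.not.mpr (by omega)
  have hchoose : (k.choose n : ℝ) ≠ 0 := mod_cast (choose_pos (by omega)).ne'
  have hchoose' : ((k - n).choose m : ℝ) ≠ 0 := mod_cast (choose_pos hm).ne'
  obtain ⟨hpd, hpd'⟩ := mul_ne_zero_iff.mp (hd_split ▸ poch_ne_zero hd k)
  rw [hd_split, hk, hl, ← neg_one_pow_mul_poch]
  field_simp

open Nat in
lemma psi2_coeff_eq_sum {a d : ℝ} (ha : ∀ n : ℕ, a ≠ -(n : ℝ)) (hd : ∀ n : ℕ, d ≠ -(n : ℝ))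
    (k l : ℕ) :
    poch a (k + l) / (poch d k * poch a l * k ! * l !) =
      ∑ n ∈ range (min k l + 1), ∑ m ∈ range (k - n + 1),
        (-1) ^ m * poch (d - a) m / (poch d (m + n) * m ! * n ! * (k - m - n)! * (l - n)!) := by
  have inner (n : ℕ) : ∑ m ∈ range (k - n + 1), ((k - n).choose m : ℝ) *
      (descPochhammer ℤ m).smeval (-(d - a)) * poch (d + n + m) (k - n - m) =
        poch (a + n) (k - n) := by
    rw [← poch_add_eq_sum]
    ring_nf
  have outer : ∑ n ∈ range (min k l + 1), (k.choose n : ℝ) * l.descFactorial n *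
      poch (a + n) (k - n) = poch (a + l) k := by
    rw [poch_add_eq_sum a l k]
    simp only [descPochhammer_smeval_eq_descFactorial]
    refine sum_subset (range_subset_range.mpr (by omega)) fun n hk hmin => ?_
    simp only [mem_range] at hk hmin
    simp [descFactorial_eq_zero_iff_lt.mpr (by omega : l < n)]
  calc poch a (k + l) / (poch d k * poch a l * k ! * l !)
      = poch (a + l) k / (poch d k * k ! * l !) := by
        rw [add_comm k, poch_add]
        field_simp [poch_ne_zero ha l]
    _ = _ := by
        rw [← outer, sum_div]
        refine sum_congr rfl fun n hn => ?_
        rw [← inner, mul_sum, sum_div]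
        refine sum_congr rfl fun m hm => (neg_one_pow_mul_poch_div_eq hd _ ?_ ?_).symm <;>
          simp only [mem_range] at hn hm <;> omega

lemma abs_poch_le (b : ℝ) (m : ℕ) : |poch b m| ≤ (|b| + 1) ^ m * m.factorial := by
  rw [poch, abs_prod, ← prod_range_add_one_eq_factorial, Nat.cast_prod, ← card_range m,
    ← prod_const, card_range, ← prod_mul_distrib]
  refine prod_le_prod (fun _ _ => abs_nonneg _) fun i _ => ?_
  push_cast
  nlinarith [abs_add_le b i, abs_nonneg b, abs_of_nonneg (Nat.cast_nonneg i : (0 : ℝ) ≤ i)]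

lemma pow_mul_factorial_le_abs_poch {d δ : ℝ} (hδ : 0 ≤ δ) (h : ∀ i : ℕ, δ * (i + 1) ≤ |d + i|)
    (m : ℕ) : δ ^ m * m.factorial ≤ |poch d m| := by
  rw [poch, abs_prod, ← prod_range_add_one_eq_factorial, Nat.cast_prod, ← card_range m,
    ← prod_const, card_range, ← prod_mul_distrib]
  exact prod_le_prod (fun _ _ => by positivity) fun i _ => mod_cast h i

lemma exists_pos_forall_le_of_eventually {f : ℕ → ℝ} {c : ℝ} (hc : 0 < c) (hf : ∀ i, 0 < f i)
    (hev : ∀ᶠ i in atTop, c ≤ f i) : ∃ δ > 0, ∀ i, δ ≤ f i := by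
  obtain ⟨N, hN⟩ := eventually_atTop.mp hev
  clear hev
  induction N generalizing c with
  | zero => exact ⟨c, hc, fun i => hN i i.zero_le⟩
  | succ N ih =>
    exact ih (lt_min hc (hf N)) fun i hi => hi.eq_or_lt.elim (fun h => h ▸ min_le_right _ _)
      fun h => (min_le_left _ _).trans (hN i h)

lemma exists_pos_mul_succ_le_abs_add {d : ℝ} (hd : ∀ n : ℕ, d ≠ -(n : ℝ)) :
    ∃ δ > 0, ∀ i : ℕ, δ * (i + 1) ≤ |d + i| := by
  have hpos (i : ℕ) : 0 < |d + i| / (i + 1) :=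
    div_pos (abs_pos.mpr fun h => hd i (eq_neg_of_add_eq_zero_left h)) i.cast_add_one_pos
  have hev : ∀ᶠ i : ℕ in atTop, 1 / 2 ≤ |d + i| / (i + 1) := by
    filter_upwards [eventually_gt_atTop ⌈2 * |d|⌉₊] with i hi
    rw [le_div_iff₀ i.cast_add_one_pos]
    have : (⌈2 * |d|⌉₊ + 1 : ℝ) ≤ i := mod_cast hi
    linarith [Nat.le_ceil (2 * |d|), neg_abs_le d, le_abs_self (d + i)]
  obtain ⟨δ, hδ, h⟩ := exists_pos_forall_le_of_eventually one_half_pos hpos hev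
  exact ⟨δ, hδ, fun i => (le_div_iff₀ i.cast_add_one_pos).mp (h i)⟩

noncomputable def phi3Term (b g w z : ℝ) (q : ℕ × ℕ) : ℝ :=
  poch b q.1 / (poch g (q.1 + q.2) * (Nat.factorial q.1) * (Nat.factorial q.2)) *
    w ^ q.1 * z ^ q.2

open Nat in
lemma summable_norm_phi3Term (b : ℝ) {g : ℝ} (hg : ∀ n : ℕ, g ≠ -(n : ℝ)) (w z : ℝ) :
    Summable fun q => ‖phi3Term b g w z q‖ := by
  obtain ⟨δ, hδ, hδg⟩ := exists_pos_mul_succ_le_abs_add hg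
  set A := (|b| + 1) * |w| / δ
  set B := |z| / δ
  refine Summable.of_nonneg_of_le (fun _ => norm_nonneg _) (fun ⟨m, n⟩ => ?_)
    ((summable_pow_div_factorial A).mul_of_nonneg (summable_pow_div_factorial B)
      (fun _ => by positivity) fun _ => by positivity)
  have hden : δ ^ (m + n) * m ! ≤ |poch g (m + n)| :=
    (mul_le_mul_of_nonneg_left (mod_cast factorial_le (m.le_add_right n)) (by positivity)).trans
      (pow_mul_factorial_le_abs_poch hδ.le hδg _)
  calc ‖phi3Term b g w z (m, n)‖
      = |poch b m| * |w| ^ m * |z| ^ n / (|poch g (m + n)| * m ! * n !) := by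
        simp only [phi3Term, norm_mul, norm_div, norm_pow, Real.norm_eq_abs, Nat.abs_cast]
        ring
    _ ≤ (|b| + 1) ^ m * m ! * |w| ^ m * |z| ^ n / (δ ^ (m + n) * m ! * m ! * n !) := by
        gcongr
        exact abs_poch_le b m
    _ = A ^ m / m ! * (B ^ n / n !) := by
        simp only [A, B, div_pow, mul_pow, pow_add]
        field_simp

noncomputable def expTerm (w z : ℝ) (p : ℕ × ℕ) : ℝ :=
  w ^ p.1 / p.1.factorial * (z ^ p.2 / p.2.factorial)

lemma summable_norm_expTerm (w z : ℝ) : Summable fun p => ‖expTerm w z p‖ := by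
  have := (Real.summable_pow_div_factorial w).norm.mul_norm (Real.summable_pow_div_factorial z).norm
  exact this

lemma hasSum_expTerm (w z : ℝ) : HasSum (expTerm w z) (exp (w + z)) := by
  have hexp (x : ℝ) : HasSum (fun n : ℕ => x ^ n / n.factorial) (exp x) := by
    rw [Real.exp_eq_exp_ℝ]
    exact NormedSpace.expSeries_div_hasSum_exp x
  have hsum := summable_mul_of_summable_norm (hexp w).summable.norm (hexp z).summable.norm
  rw [exp_add]
  exact (hexp w).mul (hexp z) hsum

/-- The bidegree in `(w, z)` of `w ^ p z ^ q (-w) ^ m (w z) ^ n`, for `x = ((p, q), (m, n))`. -/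
def bidegree (x : (ℕ × ℕ) × (ℕ × ℕ)) : ℕ × ℕ := (x.1.1 + x.2.1 + x.2.2, x.1.2 + x.2.2)

lemma tsum_bidegree_fiber_eq_sum {M : Type*} [AddCommMonoid M] [TopologicalSpace M]
    (f : (ℕ × ℕ) × (ℕ × ℕ) → M) (k l : ℕ) :
    ∑' x : bidegree ⁻¹' {(k, l)}, f x =
      ∑ n ∈ range (min k l + 1), ∑ m ∈ range (k - n + 1), f ((k - m - n, l - n), (m, n)) := by
  let φ : (Σ _ : ℕ, ℕ) → (ℕ × ℕ) × (ℕ × ℕ) := fun p => ((k - p.2 - p.1, l - p.1), (p.2, p.1))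
  have hφ : Set.InjOn φ ((range (min k l + 1)).sigma fun n => range (k - n + 1)) := by
    rintro ⟨n, m⟩ - ⟨n', m'⟩ - h
    simp only [φ, Prod.mk.injEq] at h
    rw [h.2.1, h.2.2]
  have hfiber : bidegree ⁻¹' {(k, l)} =
      ↑(((range (min k l + 1)).sigma fun n => range (k - n + 1)).image φ) := by
    ext ⟨⟨p, q⟩, m, n⟩
    simp only [bidegree, Set.mem_preimage, Set.mem_singleton_iff, Prod.mk.injEq, coe_image,
      Set.mem_image, coe_sigma, Set.mem_sigma_iff, coe_range, Set.mem_Iio, Sigma.exists, φ]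
    constructor
    · rintro ⟨rfl, rfl⟩
      exact ⟨n, m, ⟨by omega, by omega⟩, ⟨by omega, by omega⟩, rfl, rfl⟩
    · rintro ⟨n, m, ⟨hn, hm⟩, ⟨rfl, rfl⟩, rfl, rfl⟩
      omega
  rw [hfiber, Finset.tsum_subtype', sum_image hφ, sum_sigma]

open Nat in
lemma expTerm_mul_phi3Term (b g w z : ℝ) {k l m n : ℕ} (hk : m + n ≤ k) (hl : n ≤ l) :
    expTerm w z (k - m - n, l - n) * phi3Term b g (-w) (w * z) (m, n) =
      (-1) ^ m * poch b m / (poch g (m + n) * m ! * n ! * (k - m - n)! * (l - n)!) *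
        w ^ k * z ^ l := by
  rw [show w ^ k = w ^ (k - m - n) * w ^ m * w ^ n by rw [← pow_add, ← pow_add]; congr 1; omega,
    show z ^ l = z ^ (l - n) * z ^ n by rw [← pow_add]; congr 1; omega,
    expTerm, phi3Term, neg_pow w m, mul_pow]
  ring

/-- Relation between the two-variable confluent hypergeometric functions:
Ψ₂(a; d, a; w, z) = exp(w + z) Φ₃(d - a; d; -w, w z). -/
theorem psi2_eq_exp_mul_phi3 (a d w z : ℝ)
    (ha : ∀ n : ℕ, a ≠ -(n : ℝ)) (hd : ∀ n : ℕ, d ≠ -(n : ℝ)) :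
    psi2 a d a w z = Real.exp (w + z) * phi3 (d - a) d (-w) (w * z) := by
  let F : (ℕ × ℕ) × (ℕ × ℕ) → ℝ := fun x => expTerm w z x.1 * phi3Term (d - a) d (-w) (w * z) x.2
  have hphi3 := summable_norm_phi3Term (d - a) hd (-w) (w * z)
  have hF : HasSum F (exp (w + z) * phi3 (d - a) d (-w) (w * z)) :=
    (hasSum_expTerm w z).mul hphi3.of_norm.hasSum
      (summable_mul_of_summable_norm (summable_norm_expTerm w z) hphi3)
  rw [← (hF.tsum_fiberwise bidegree).tsum_eq]
  refine tsum_congr fun ⟨k, l⟩ => (Eq.trans (tsum_bidegree_fiber_eq_sum F k l) ?_).symm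
  simp only [psi2_coeff_eq_sum ha hd, sum_mul]
  refine sum_congr rfl fun n hn => sum_congr rfl fun m hm => ?_
  simp only [mem_range] at hn hm
  exact expTerm_mul_phi3Term _ _ _ _ (by omega) (by omega)
end

section
/- For κ > 0, μ > 0, Ω > 0, the function f(x) = (μ (1+κ)^{(μ+1)/2} x^{(μ−1)/2}) / (κ^{(μ−1)/2} exp(μκ) Ω^{(μ+1)/2}) · exp(−μ(1+κ)x/Ω) · I_{μ−1}(2μ√(κ(1+κ)x/Ω)) is a probability density on (0, ∞): it is nonnegative and ∫₀^∞ f(x) dx = 1. -/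
/-!
Expanding `I_{μ-1}` in its power series writes the κ-μ density as a Poisson mixture of gamma
densities: with `a = μκ` and `λ = μ(1+κ)/Ω`,
`f(x) = ∑ₖ e^{-a} aᵏ/k! · γ(μ+k, λ)(x)`, where `γ(s, λ)` is the gamma density of shape `s` and
rate `λ`. Every term is nonnegative, the `k`-th one integrates to the `k`-th Poisson weight, and
these weights sum to `1`.
-/

open Real MeasureTheory Filter

/-- The κ-μ power probability density function. -/
noncomputable def kappaMuPDF (κ μ Ω x : ℝ) : ℝ :=
  μ * (1 + κ) ^ ((μ + 1) / 2) * x ^ ((μ - 1) / 2) /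
      (κ ^ ((μ - 1) / 2) * Real.exp (μ * κ) * Ω ^ ((μ + 1) / 2)) *
    Real.exp (-μ * (1 + κ) * x / Ω) *
    besselI (μ - 1) (2 * μ * Real.sqrt (κ * (1 + κ) * x / Ω))


open ProbabilityTheory
open scoped Nat

lemma integral_gammaPDFReal_Ioi {a r : ℝ} (ha : 0 < a) (hr : 0 < r) :
    ∫ x in Set.Ioi 0, gammaPDFReal a r x = 1 := by
  have hΓ : Gamma a ≠ 0 := (Gamma_pos_of_pos ha).ne'
  calc ∫ x in Set.Ioi 0, gammaPDFReal a r x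
      = ∫ x in Set.Ioi 0, r ^ a / Gamma a * (x ^ (a - 1) * exp (-(r * x))) :=
        setIntegral_congr_fun measurableSet_Ioi fun x (hx : 0 < x) ↦ by
          rw [gammaPDFReal, if_pos hx.le, mul_assoc]
    _ = r ^ a / Gamma a * ((1 / r) ^ a * Gamma a) := by
        rw [integral_const_mul, integral_rpow_mul_exp_neg_mul_Ioi ha hr]
    _ = 1 := by
        rw [div_rpow zero_le_one hr.le, one_rpow]
        field_simp

lemma integral_tsum_mul_of_integral_eq_one {α ι : Type*} [MeasurableSpace α] [Countable ι]
    {μ : Measure α} {p : ι → ℝ} {f : ι → α → ℝ} (hp : Summable p)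
    (hf_nonneg : ∀ i, 0 ≤ᵐ[μ] f i) (hf_one : ∀ i, ∫ x, f i x ∂μ = 1) :
    ∫ x, ∑' i, p i * f i x ∂μ = ∑' i, p i := by
  have hf_int (i : ι) : Integrable (f i) μ := .of_integral_ne_zero (by simp [hf_one])
  have hf_norm (i : ι) : ∫ x, ‖p i * f i x‖ ∂μ = |p i| := by
    simp_rw [norm_mul, Real.norm_eq_abs]
    rw [integral_const_mul, integral_congr_ae ((hf_nonneg i).mono fun x hx ↦ abs_of_nonneg hx),
      hf_one, mul_one]
  rw [← integral_tsum_of_summable_integral_norm (fun i ↦ (hf_int i).const_mul (p i))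
    (by simpa only [hf_norm] using hp.abs)]
  simp_rw [integral_const_mul, hf_one, mul_one]

lemma besselI_two_mul_sqrt (ν : ℝ) {y : ℝ} (hy : 0 ≤ y) :
    besselI ν (2 * √y) = ∑' k : ℕ, y ^ (k + ν / 2) / (Gamma (ν + k + 1) * k !) := by
  refine tsum_congr fun k ↦ ?_
  rw [mul_div_cancel_left₀ _ two_ne_zero, sqrt_eq_rpow, ← rpow_mul hy]
  congr 2
  ring

lemma tsum_poisson_mul_gammaPDFReal {ν a r x : ℝ} (ha : 0 < a) (hr : 0 < r) (hx : 0 < x) :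
    ∑' k : ℕ, exp (-a) * a ^ k / k ! * gammaPDFReal (ν + k + 1) r x =
      (r / a) ^ (ν / 2) * r * exp (-a) * x ^ (ν / 2) * exp (-(r * x)) *
        besselI ν (2 * √(a * r * x)) := by
  rw [besselI_two_mul_sqrt ν (by positivity), ← tsum_mul_left]
  refine tsum_congr fun k ↦ ?_
  have ha_pow : a ^ (k + ν / 2) = a ^ k * a ^ (ν / 2) := by
    rw [rpow_add ha, rpow_natCast]
  have hr_pow : r ^ (ν + k + 1) = r ^ (ν / 2) * r ^ (k + ν / 2) * r := by
    rw [← rpow_add hr, ← rpow_add_one hr.ne']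
    ring_nf
  have hx_pow : x ^ (ν + k + 1 - 1) = x ^ (ν / 2) * x ^ (k + ν / 2) := by
    rw [← rpow_add hx]
    ring_nf
  rw [gammaPDFReal, if_pos hx.le, mul_rpow (by positivity) hx.le, mul_rpow ha.le hr.le, ha_pow,
    hr_pow, hx_pow, div_rpow hr.le ha.le]
  have : a ^ (ν / 2) ≠ 0 := by positivity
  field_simp

lemma kappaMuPDF_eq_tsum_poisson_mul_gammaPDFReal {κ μ Ω x : ℝ} (hκ : 0 < κ) (hμ : 0 < μ)
    (hΩ : 0 < Ω) (hx : 0 < x) :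
    kappaMuPDF κ μ Ω x = ∑' k : ℕ, exp (-(μ * κ)) * (μ * κ) ^ k / k ! *
      gammaPDFReal (μ + k) (μ * (1 + κ) / Ω) x := by
  simp_rw [show ∀ k : ℕ, μ + k = μ - 1 + k + 1 from fun k ↦ by ring]
  rw [tsum_poisson_mul_gammaPDFReal (by positivity) (by positivity) hx, kappaMuPDF]
  have h_arg : μ * √(κ * (1 + κ) * x / Ω) = √(μ * κ * (μ * (1 + κ) / Ω) * x) := by
    rw [show μ * κ * (μ * (1 + κ) / Ω) * x = μ ^ 2 * (κ * (1 + κ) * x / Ω) by ring,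
      sqrt_mul (sq_nonneg μ), sqrt_sq hμ.le]
  have h_ratio : μ * (1 + κ) / Ω / (μ * κ) = (1 + κ) / (κ * Ω) := by
    field_simp
  have h1κ_pow : (1 + κ) ^ ((μ + 1) / 2) = (1 + κ) ^ ((μ - 1) / 2) * (1 + κ) := by
    rw [← rpow_add_one (by positivity)]
    ring_nf
  have hΩ_pow : Ω ^ ((μ + 1) / 2) = Ω ^ ((μ - 1) / 2) * Ω := by
    rw [← rpow_add_one hΩ.ne']
    ring_nf
  rw [mul_assoc 2, h_arg, h_ratio, div_rpow (by positivity) (by positivity),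
    mul_rpow hκ.le hΩ.le, h1κ_pow, hΩ_pow, exp_neg]
  have : κ ^ ((μ - 1) / 2) ≠ 0 := by positivity
  have : Ω ^ ((μ - 1) / 2) ≠ 0 := by positivity
  field_simp

/-- The κ-μ density is a probability density on (0, ∞). -/
theorem kappaMuPDF_is_density (κ μ Ω : ℝ) (hκ : 0 < κ) (hμ : 0 < μ) (hΩ : 0 < Ω) :
    (∀ x : ℝ, 0 < x → 0 ≤ kappaMuPDF κ μ Ω x) ∧
      ∫ x in Set.Ioi (0:ℝ), kappaMuPDF κ μ Ω x = 1 := by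
  have hmix (x : ℝ) (hx : 0 < x) := kappaMuPDF_eq_tsum_poisson_mul_gammaPDFReal hκ hμ hΩ hx
  have hshape (k : ℕ) : 0 < μ + k := by positivity
  have hrate : 0 < μ * (1 + κ) / Ω := by positivity
  have hpoisson : HasSum (fun k : ℕ ↦ exp (-(μ * κ)) * (μ * κ) ^ k / k !) 1 :=
    hasSum_one_poissonMeasure ⟨μ * κ, by positivity⟩
  refine ⟨fun x hx ↦ ?_, ?_⟩
  · rw [hmix x hx]
    exact tsum_nonneg fun k ↦ mul_nonneg (by positivity) (gammaPDFReal_nonneg (hshape k) hrate x)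
  · rw [setIntegral_congr_fun measurableSet_Ioi hmix,
      integral_tsum_mul_of_integral_eq_one hpoisson.summable
        (fun k ↦ .of_forall (gammaPDFReal_nonneg (hshape k) hrate))
        (fun k ↦ integral_gammaPDFReal_Ioi (hshape k) hrate)]
    exact hpoisson.tsum_eq
end

section
/- For κ > 0, μ > 0, Ω > 0 and z ≥ 0, the cumulative distribution function of the κ-μ power distribution satisfies ∫₀^z f(x) dx = 1 − Q_μ(√(2κμ), √(2(1+κ)μ z / Ω)), where f is the κ-μ density and Q_μ is the generalized Marcum Q function. -/
open Real MeasureTheory Filter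

/-! The substitution `x = Ω t² / (2μ(1+κ))` turns the κ-μ density into `α ^ (1 - μ)` times the
Marcum integrand `t ^ μ e^{-(α² + t²)/2} I_{μ-1}(α t)` with `α = √(2κμ)`, so the CDF up to `z` is
`α ^ (1 - μ)` times the integral of that integrand over `(0, β]`, `β = √(2(1+κ)μz/Ω)`. It remains
to see that the integrand has total mass `α ^ (μ - 1)` on `(0, ∞)`, i.e. `Q_μ(α, 0) = 1`: expanding
`I_{μ-1}` in its power series, the `k`-th term integrates (a Gamma integral) to
`α ^ (μ - 1) e^{-α²/2} (α²/2)^k / k!`, and these sum to `α ^ (μ - 1)` by the exponential series. -/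

open scoped Nat

noncomputable def marcumIntegrand (M α x : ℝ) : ℝ :=
  x ^ M * Real.exp (-(α ^ 2 + x ^ 2) / 2) * besselI (M - 1) (α * x)

/-- The `k`-th term of the Bessel series of `marcumIntegrand M α x`; `x²` is written as the real
power `x ^ (2 : ℝ)` to match `integral_rpow_mul_exp_neg_mul_rpow`. -/
noncomputable def marcumTerm (M α : ℝ) (k : ℕ) (x : ℝ) : ℝ :=
  Real.exp (-α ^ 2 / 2) * (α / 2) ^ (2 * (k : ℝ) + M - 1) / (Real.Gamma (M + k) * k !) *
    (x ^ (2 * (k : ℝ) + 2 * M - 1) * Real.exp (-(1 / 2) * x ^ (2 : ℝ)))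

section MarcumSeries

variable {M α : ℝ}

lemma marcumTerm_nonneg (hα : 0 ≤ α) (hM : 0 < M) (k : ℕ) {x : ℝ} (hx : 0 ≤ x) :
    0 ≤ marcumTerm M α k x := by
  have := Real.Gamma_pos_of_pos (by positivity : 0 < M + k)
  unfold marcumTerm
  positivity

lemma marcumIntegrand_eq_tsum (hα : 0 < α) (hM : 0 < M) {x : ℝ} (hx : 0 < x) :
    marcumIntegrand M α x = ∑' k : ℕ, marcumTerm M α k x := by
  rw [marcumIntegrand, besselI, ← tsum_mul_left]
  refine tsum_congr fun k => ?_
  rw [show M - 1 + k + 1 = M + k by ring]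
  have := Real.Gamma_pos_of_pos (by positivity : 0 < M + k)
  -- both sides are positive products of powers and exponentials, so compare logarithms
  refine Real.log_injOn_pos (Set.mem_Ioi.2 (by positivity))
    (Set.mem_Ioi.2 (by unfold marcumTerm; positivity)) ?_
  unfold marcumTerm
  simp (disch := positivity) only [Real.log_mul, Real.log_div, Real.log_rpow, Real.log_exp,
    Real.rpow_two]
  ring

lemma integrableOn_marcumTerm (hM : 0 < M) (k : ℕ) :
    IntegrableOn (marcumTerm M α k) (Set.Ioi 0) :=
  (integrableOn_rpow_mul_exp_neg_mul_rpow (by linarith [(k.cast_nonneg : (0 : ℝ) ≤ k)])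
    two_pos one_half_pos).const_mul _

lemma integral_marcumTerm (hα : 0 < α) (hM : 0 < M) (k : ℕ) :
    ∫ x in Set.Ioi 0, marcumTerm M α k x =
      α ^ (M - 1) * Real.exp (-α ^ 2 / 2) * ((α ^ 2 / 2) ^ k / k !) := by
  simp only [marcumTerm]
  rw [integral_const_mul, integral_rpow_mul_exp_neg_mul_rpow two_pos
    (by linarith [(k.cast_nonneg : (0 : ℝ) ≤ k)]) one_half_pos,
    show (2 * (k : ℝ) + 2 * M - 1 + 1) / 2 = M + k by ring]
  have := Real.Gamma_pos_of_pos (by positivity : 0 < M + k)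
  refine Real.log_injOn_pos (Set.mem_Ioi.2 (by positivity)) (Set.mem_Ioi.2 (by positivity)) ?_
  simp (disch := positivity) only [Real.log_mul, Real.log_div, Real.log_rpow, Real.log_exp,
    Real.log_pow, Real.log_one]
  ring

lemma hasSum_integral_marcumTerm (hα : 0 < α) (hM : 0 < M) :
    HasSum (fun k : ℕ => ∫ x in Set.Ioi 0, marcumTerm M α k x) (α ^ (M - 1)) := by
  have hexp := (NormedSpace.expSeries_div_hasSum_exp (α ^ 2 / 2)).mul_left
    (α ^ (M - 1) * Real.exp (-α ^ 2 / 2))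
  have hsum : α ^ (M - 1) * Real.exp (-α ^ 2 / 2) * Real.exp (α ^ 2 / 2) = α ^ (M - 1) := by
    rw [mul_assoc, ← Real.exp_add, neg_div, neg_add_cancel, Real.exp_zero, mul_one]
  rw [← Real.exp_eq_exp_ℝ, hsum] at hexp
  simpa only [integral_marcumTerm hα hM] using hexp

theorem integral_marcumIntegrand_Ioi_zero (hα : 0 < α) (hM : 0 < M) :
    ∫ x in Set.Ioi 0, marcumIntegrand M α x = α ^ (M - 1) := by
  have hnorm (k : ℕ) : ∫ x in Set.Ioi 0, ‖marcumTerm M α k x‖ =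
      ∫ x in Set.Ioi 0, marcumTerm M α k x :=
    setIntegral_congr_fun measurableSet_Ioi fun x hx =>
      Real.norm_of_nonneg (marcumTerm_nonneg hα.le hM k (le_of_lt hx))
  have htermwise := hasSum_integral_of_summable_integral_norm (integrableOn_marcumTerm (α := α) hM)
    (by simpa only [hnorm] using (hasSum_integral_marcumTerm hα hM).summable)
  rw [setIntegral_congr_fun measurableSet_Ioi fun x hx => marcumIntegrand_eq_tsum hα hM hx]
  exact htermwise.unique (hasSum_integral_marcumTerm hα hM)

theorem integrableOn_marcumIntegrand (hα : 0 < α) (hM : 0 < M) :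
    IntegrableOn (marcumIntegrand M α) (Set.Ioi 0) :=
  -- the Bochner integral of a non-integrable function is `0`
  Integrable.of_integral_ne_zero <| by
    rw [integral_marcumIntegrand_Ioi_zero hα hM]
    positivity

theorem marcumQ_eq_one_sub (hα : 0 < α) (hM : 0 < M) {β : ℝ} (hβ : 0 ≤ β) :
    marcumQ M α β = 1 - α ^ (1 - M) * ∫ x in Set.Ioc 0 β, marcumIntegrand M α x := by
  have hsplit := setIntegral_union (Set.Ioc_disjoint_Ioi le_rfl) measurableSet_Ioi
    ((integrableOn_marcumIntegrand hα hM).mono_set Set.Ioc_subset_Ioi_self)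
    ((integrableOn_marcumIntegrand hα hM).mono_set (Set.Ioi_subset_Ioi hβ))
  rw [Set.Ioc_union_Ioi_eq_Ioi hβ, integral_marcumIntegrand_Ioi_zero hα hM] at hsplit
  have hinv : α ^ (1 - M) * α ^ (M - 1) = 1 := by
    rw [← Real.rpow_add hα, sub_add_sub_cancel', sub_self, Real.rpow_zero]
  change α ^ (1 - M) * ∫ x in Set.Ioi β, marcumIntegrand M α x = _
  linear_combination hinv - α ^ (1 - M) * hsplit

end MarcumSeries

lemma image_mul_sq_Ioc {d β : ℝ} (hd : 0 < d) (hβ : 0 ≤ β) :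
    (fun t : ℝ => d * t ^ 2) '' Set.Ioc 0 β = Set.Ioc 0 (d * β ^ 2) := by
  ext x
  constructor
  · rintro ⟨t, ⟨ht0, htβ⟩, rfl⟩
    dsimp only
    exact ⟨by positivity, by gcongr⟩
  · rintro ⟨hx0, hxβ⟩
    have hxd : 0 < x / d := by positivity
    refine ⟨Real.sqrt (x / d), ⟨Real.sqrt_pos.2 hxd, ?_⟩, ?_⟩
    · rw [Real.sqrt_le_left hβ, div_le_iff₀' hd]
      exact hxβ
    · dsimp only
      rw [Real.sq_sqrt hxd.le]
      field_simp

theorem integral_Ioc_eq_integral_Ioc_comp_mul_sq {E : Type*} [NormedAddCommGroup E]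
    [NormedSpace ℝ E] {d β : ℝ} (hd : 0 < d) (hβ : 0 ≤ β) (f : ℝ → E) :
    ∫ x in Set.Ioc 0 (d * β ^ 2), f x = ∫ t in Set.Ioc 0 β, (2 * d * t) • f (d * t ^ 2) := by
  have hderiv (t : ℝ) (_ : t ∈ Set.Ioc 0 β) :
      HasDerivWithinAt (fun t : ℝ => d * t ^ 2) (2 * d * t) (Set.Ioc 0 β) t := by
    refine ((hasDerivAt_pow 2 t).const_mul d).hasDerivWithinAt.congr_deriv ?_
    push_cast
    ring
  have hinj : Set.InjOn (fun t : ℝ => d * t ^ 2) (Set.Ioc 0 β) := fun s hs t ht hst =>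
    (sq_eq_sq₀ hs.1.le ht.1.le).1 (mul_left_cancel₀ hd.ne' hst)
  rw [← image_mul_sq_Ioc hd hβ,
    integral_image_eq_integral_abs_deriv_smul measurableSet_Ioc hderiv hinj]
  refine setIntegral_congr_fun measurableSet_Ioc fun t ht => ?_
  rw [abs_of_pos (by have := ht.1; positivity)]

theorem mul_kappaMuPDF_mul_sq {κ μ Ω t : ℝ} (hκ : 0 < κ) (hμ : 0 < μ) (hΩ : 0 < Ω) (ht : 0 < t) :
    2 * (Ω / (2 * μ * (1 + κ))) * t * kappaMuPDF κ μ Ω (Ω / (2 * μ * (1 + κ)) * t ^ 2) =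
      Real.sqrt (2 * κ * μ) ^ (1 - μ) * marcumIntegrand μ (Real.sqrt (2 * κ * μ)) t := by
  have hα : 0 < Real.sqrt (2 * κ * μ) := Real.sqrt_pos.2 (by positivity)
  have hbessel_arg : 2 * μ * Real.sqrt (κ * (1 + κ) * (Ω / (2 * μ * (1 + κ)) * t ^ 2) / Ω) =
      Real.sqrt (2 * κ * μ) * t := by
    rw [show κ * (1 + κ) * (Ω / (2 * μ * (1 + κ)) * t ^ 2) / Ω =
        (Real.sqrt (2 * κ * μ) * t / (2 * μ)) ^ 2 by
      rw [div_pow, mul_pow, Real.sq_sqrt (by positivity)]; field_simp,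
      Real.sqrt_sq (by positivity)]
    field_simp
  have hprefactor : 2 * (Ω / (2 * μ * (1 + κ))) * t *
      (μ * (1 + κ) ^ ((μ + 1) / 2) * (Ω / (2 * μ * (1 + κ)) * t ^ 2) ^ ((μ - 1) / 2) /
        (κ ^ ((μ - 1) / 2) * Real.exp (μ * κ) * Ω ^ ((μ + 1) / 2)) *
        Real.exp (-μ * (1 + κ) * (Ω / (2 * μ * (1 + κ)) * t ^ 2) / Ω)) =
      Real.sqrt (2 * κ * μ) ^ (1 - μ) *
        (t ^ μ * Real.exp (-(Real.sqrt (2 * κ * μ) ^ 2 + t ^ 2) / 2)) := by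
    rw [Real.sq_sqrt (by positivity)]
    refine Real.log_injOn_pos (Set.mem_Ioi.2 (by positivity)) (Set.mem_Ioi.2 (by positivity)) ?_
    simp (disch := positivity) only [Real.log_mul, Real.log_div, Real.log_rpow, Real.log_exp,
      Real.log_pow, Real.log_sqrt]
    push_cast
    field_simp
    ring
  rw [kappaMuPDF, marcumIntegrand, hbessel_arg]
  linear_combination besselI (μ - 1) (Real.sqrt (2 * κ * μ) * t) * hprefactor

/-- The CDF of the κ-μ power distribution in terms of the Marcum Q function. -/
theorem kappaMuCDF_eq_marcumQ (κ μ Ω z : ℝ) (hκ : 0 < κ) (hμ : 0 < μ) (hΩ : 0 < Ω)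
    (hz : 0 ≤ z) :
    ∫ x in Set.Ioc (0:ℝ) z, kappaMuPDF κ μ Ω x =
      1 - marcumQ μ (Real.sqrt (2 * κ * μ)) (Real.sqrt (2 * (1 + κ) * μ * z / Ω)) := by
  set α := Real.sqrt (2 * κ * μ)
  set β := Real.sqrt (2 * (1 + κ) * μ * z / Ω)
  have hα : 0 < α := Real.sqrt_pos.2 (by positivity)
  have hβ : 0 ≤ β := Real.sqrt_nonneg _
  have hz_eq : z = Ω / (2 * μ * (1 + κ)) * β ^ 2 := by
    rw [Real.sq_sqrt (by positivity)]
    field_simp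
  rw [marcumQ_eq_one_sub hα hμ hβ, sub_sub_cancel, hz_eq,
    integral_Ioc_eq_integral_Ioc_comp_mul_sq (by positivity) hβ, ← integral_const_mul]
  exact setIntegral_congr_fun measurableSet_Ioc fun t ht =>
    mul_kappaMuPDF_mul_sq hκ hμ hΩ ht.1
end
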